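/- arXiv:1612.09359 — 4 statements merged into one kernel-verified Lean document; each statement's English description precedes it below -/
import Mathlib

section
/- Let f be a multiplicative arithmetic function satisfying the Hecke relation f(m)f(n) = ∑_{d | gcd(m,n)} f(mn/d²) for all m,n ≥ 1 with f(1)=1. Let a be the Dirichlet-inverse coefficients of n ↦ f(n), i.e. ∑_{de=n} f(d)a(e) = [n=1]. Then for m, n squarefree with gcd(m,n) = 1, a(mn²) = μ(m) f(m). -/
open Finset ArithmeticFunction

section Aux

variable (f : ℕ → ℝ)

/-- `f` packaged as an arithmetic function. -/
noncomputable def heckeF : ArithmeticFunction ℝ :=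
  ⟨fun n => if n = 0 then 0 else f n, by simp⟩

/-- The candidate Dirichlet inverse of `f`. -/
noncomputable def heckeG : ArithmeticFunction ℝ :=
  ⟨fun n => if n = 0 then 0 else ∏ p ∈ n.primeFactors,
      (if n.factorization p = 1 then -f p else if n.factorization p = 2 then 1 else 0), by simp⟩

lemma heckeF_apply {n : ℕ} (hn : n ≠ 0) : heckeF f n = f n := by
  simp [heckeF, hn]

lemma heckeG_apply {n : ℕ} (hn : n ≠ 0) :
    heckeG f n = ∏ p ∈ n.primeFactors,
      (if n.factorization p = 1 then -f p else if n.factorization p = 2 then 1 else 0) := by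
  simp [heckeG, hn]

lemma heckeF_isMult (hf1 : f 1 = 1) (hmul : ∀ m n : ℕ, Nat.Coprime m n → f (m * n) = f m * f n) :
    (heckeF f).IsMultiplicative := by
  rw [ArithmeticFunction.IsMultiplicative.iff_ne_zero]
  constructor
  · simp [heckeF, hf1]
  · intro m n hm hn cop
    simp [heckeF_apply f hm, heckeF_apply f hn, heckeF_apply f (mul_ne_zero hm hn),
      hmul m n cop]

lemma heckeG_isMult : (heckeG f).IsMultiplicative := by
  rw [ArithmeticFunction.IsMultiplicative.iff_ne_zero]
  constructor
  · simp [heckeG]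
  · intro m n hm hn cop
    rw [heckeG_apply f hm, heckeG_apply f hn, heckeG_apply f (mul_ne_zero hm hn)]
    rw [Nat.Coprime.primeFactors_mul cop,
      Finset.prod_union (Nat.Coprime.disjoint_primeFactors cop)]
    congr 1
    · apply Finset.prod_congr rfl
      intro p hp
      have h2 : n.factorization p = 0 := by
        have : p ∉ n.primeFactors := Finset.disjoint_left.mp
          (Nat.Coprime.disjoint_primeFactors cop) hp
        rwa [← Nat.support_factorization, Finsupp.notMem_support_iff] at this
      rw [Nat.factorization_mul hm hn]
      simp [h2]
    · apply Finset.prod_congr rfl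
      intro p hp
      have h2 : m.factorization p = 0 := by
        have : p ∉ m.primeFactors := Finset.disjoint_right.mp
          (Nat.Coprime.disjoint_primeFactors cop) hp
        rwa [← Nat.support_factorization, Finsupp.notMem_support_iff] at this
      rw [Nat.factorization_mul hm hn]
      simp [h2]

lemma heckeG_prime_pow {p : ℕ} (hp : p.Prime) (k : ℕ) :
    heckeG f (p ^ k) = if k = 1 then -f p else if k = 2 then 1 else if k = 0 then 1 else 0 := by
  rcases Nat.eq_zero_or_pos k with rfl | hk
  · simp [heckeG_apply f one_ne_zero, Nat.primeFactors_one]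
  · rw [heckeG_apply f (pow_ne_zero k hp.ne_zero)]
    rw [Nat.primeFactors_prime_pow (by omega : k ≠ 0) hp, Finset.prod_singleton,
      hp.factorization_pow, Finsupp.single_eq_same]
    rcases eq_or_ne k 1 with rfl | h1
    · simp
    rcases eq_or_ne k 2 with rfl | h2
    · simp
    rw [if_neg h1, if_neg h1, if_neg h2, if_neg h2, if_neg (by omega : ¬k = 0)]

/-- The Hecke relation at a prime, specialised. -/
lemma hecke_prime_pow (hf1 : f 1 = 1)
    (hecke : ∀ m n : ℕ, 0 < m → 0 < n →
      f m * f n = ∑ d ∈ (Nat.gcd m n).divisors, f (m * n / d ^ 2))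
    {p : ℕ} (hp : p.Prime) {k : ℕ} (hk : 1 ≤ k) :
    f p * f (p ^ k) = f (p ^ (k + 1)) + f (p ^ (k - 1)) := by
  have h := hecke p (p ^ k) hp.pos (pow_pos hp.pos k)
  have hg : Nat.gcd p (p ^ k) = p := Nat.gcd_eq_left (dvd_pow_self p (by omega : k ≠ 0))
  rw [hg, hp.divisors] at h
  rw [h, Finset.sum_insert (by simp [Ne.symm hp.ne_one])]
  simp only [Finset.sum_singleton]
  have h1 : p * p ^ k / 1 ^ 2 = p ^ (k + 1) := by
    rw [one_pow, Nat.div_one, ← pow_succ']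
  have h2 : p * p ^ k / p ^ 2 = p ^ (k - 1) := by
    have he : k + 1 - 2 = k - 1 := by omega
    rw [← pow_succ', Nat.pow_div (by omega) hp.pos, he]
  rw [h1, h2]

lemma heckeFG_eq_one (hf1 : f 1 = 1)
    (hmul : ∀ m n : ℕ, Nat.Coprime m n → f (m * n) = f m * f n)
    (hecke : ∀ m n : ℕ, 0 < m → 0 < n →
      f m * f n = ∑ d ∈ (Nat.gcd m n).divisors, f (m * n / d ^ 2)) :
    heckeF f * heckeG f = 1 := by
  have hF := heckeF_isMult f hf1 hmul
  have hG := heckeG_isMult f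
  have hFG := hF.mul hG
  -- value at prime powers p^k, k ≥ 1, is zero
  have key : ∀ p k : ℕ, p.Prime → 1 ≤ k → (heckeF f * heckeG f) (p ^ k) = 0 := by
    intro p k hp hk
    rw [ArithmeticFunction.mul_apply, Nat.sum_divisorsAntidiagonal (heckeF f · * heckeG f ·),
      Nat.divisors_prime_pow hp, Finset.sum_map]
    simp only [Function.Embedding.coeFn_mk]
    have hterm : ∀ i ∈ Finset.range (k + 1),
        heckeF f (p ^ i) * heckeG f (p ^ k / p ^ i) =
        f (p ^ i) * heckeG f (p ^ (k - i)) := by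
      intro i hi
      rw [Finset.mem_range] at hi
      rw [heckeF_apply f (pow_ne_zero i hp.ne_zero), Nat.pow_div (by omega) hp.pos]
    rw [Finset.sum_congr rfl hterm]
    rcases Nat.lt_or_ge k 2 with h2 | h2
    · -- k = 1
      have : k = 1 := by omega
      subst this
      rw [Finset.sum_range_succ, Finset.sum_range_one]
      rw [heckeG_prime_pow f hp 1, heckeG_prime_pow f hp 0]
      simp [hf1]
    · -- k ≥ 2 : only i = k, k-1, k-2 contribute
      have hsplit : Finset.range (k + 1) = Finset.Ico 0 (k - 2) ∪ Finset.Ico (k - 2) (k + 1) := by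
        rw [Finset.range_eq_Ico,
          ← Finset.Ico_union_Ico_eq_Ico (Nat.zero_le (k - 2)) (show k - 2 ≤ k + 1 by omega)]
      rw [hsplit, Finset.sum_union (by
        apply Finset.Ico_disjoint_Ico_consecutive)]
      have hz : ∑ i ∈ Finset.Ico 0 (k - 2), f (p ^ i) * heckeG f (p ^ (k - i)) = 0 := by
        apply Finset.sum_eq_zero
        intro i hi
        rw [Finset.mem_Ico] at hi
        rw [heckeG_prime_pow f hp (k - i)]
        have : ¬ (k - i = 1) ∧ ¬ (k - i = 2) ∧ ¬ (k - i = 0) := by omega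
        rw [if_neg this.1, if_neg this.2.1, if_neg this.2.2, mul_zero]
      rw [hz, zero_add]
      have hIco : Finset.Ico (k - 2) (k + 1) = {k - 2, k - 1, k} := by
        ext x
        simp only [Finset.mem_Ico, Finset.mem_insert, Finset.mem_singleton]
        omega
      rw [hIco]
      rw [Finset.sum_insert (by simp; omega), Finset.sum_insert (by simp; omega),
        Finset.sum_singleton]
      have e1 : k - (k - 2) = 2 := by omega
      have e2 : k - (k - 1) = 1 := by omega
      have e3 : k - k = 0 := Nat.sub_self k
      rw [e1, e2, e3, heckeG_prime_pow f hp 2, heckeG_prime_pow f hp 1, heckeG_prime_pow f hp 0]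
      norm_num
      have hh := hecke_prime_pow f hf1 hecke hp (k := k - 1) (by omega)
      have ek1 : k - 1 + 1 = k := by omega
      have ek2 : k - 1 - 1 = k - 2 := by omega
      rw [ek1, ek2] at hh
      nlinarith [hh]
  -- conclude
  ext n
  rcases Nat.eq_zero_or_pos n with rfl | hn
  · simp
  rcases eq_or_ne n 1 with rfl | hn1
  · simp [hF.1, hG.1, ArithmeticFunction.one_apply]
  · rw [ArithmeticFunction.one_apply, if_neg hn1]
    rw [hFG.multiplicative_factorization _ hn.ne']
    obtain ⟨p, hp, hpd⟩ := Nat.exists_prime_and_dvd hn1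
    have hpmem : p ∈ n.factorization.support := by
      rw [Nat.support_factorization]
      exact Nat.mem_primeFactors.mpr ⟨hp, hpd, hn.ne'⟩
    rw [Finsupp.prod]
    apply Finset.prod_eq_zero hpmem
    apply key p _ hp
    rw [Nat.support_factorization, Nat.mem_primeFactors] at hpmem
    have := (Nat.Prime.factorization_pos_of_dvd hp hn.ne' hpd)
    omega

lemma a_eq_heckeG (a : ℕ → ℝ) (hf1 : f 1 = 1)
    (hmul : ∀ m n : ℕ, Nat.Coprime m n → f (m * n) = f m * f n)
    (hecke : ∀ m n : ℕ, 0 < m → 0 < n →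
      f m * f n = ∑ d ∈ (Nat.gcd m n).divisors, f (m * n / d ^ 2))
    (hinv : ∀ n : ℕ, 0 < n →
      (∑ d ∈ n.divisors, f d * a (n / d)) = if n = 1 then 1 else 0) :
    ∀ n : ℕ, 0 < n → a n = heckeG f n := by
  have hone := heckeFG_eq_one f hf1 hmul hecke
  have hGconv : ∀ n : ℕ, 0 < n →
      (∑ d ∈ n.divisors, f d * heckeG f (n / d)) = if n = 1 then 1 else 0 := by
    intro n hn
    have := congrArg (fun F => F n) hone
    simp only [ArithmeticFunction.mul_apply, ArithmeticFunction.one_apply] at this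
    rw [Nat.sum_divisorsAntidiagonal (heckeF f · * heckeG f ·)] at this
    rw [← this]
    apply Finset.sum_congr rfl
    intro d hd
    rw [Nat.mem_divisors] at hd
    rw [heckeF_apply f (by rintro rfl; exact hn.ne' (Nat.eq_zero_of_zero_dvd hd.1))]
  intro n
  induction n using Nat.strong_induction_on with
  | _ n ih =>
    intro hn
    rcases eq_or_ne n 1 with rfl | hn1
    · have h1 := hinv 1 one_pos
      have h2 := hGconv 1 one_pos
      simp [Nat.divisors_one, hf1] at h1 h2
      rw [h1, h2]
    · have h1 := hinv n hn
      have h2 := hGconv n hn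
      rw [if_neg hn1] at h1 h2
      have hmem : 1 ∈ n.divisors := Nat.one_mem_divisors.mpr hn.ne'
      rw [← Finset.add_sum_erase _ _ hmem] at h1 h2
      have hrest : ∑ d ∈ n.divisors.erase 1, f d * a (n / d) =
          ∑ d ∈ n.divisors.erase 1, f d * heckeG f (n / d) := by
        apply Finset.sum_congr rfl
        intro d hd
        rw [Finset.mem_erase, Nat.mem_divisors] at hd
        have hd1 : 1 < d := by
          rcases Nat.lt_or_ge d 2 with h | h
          · interval_cases d
            · exact absurd (Nat.eq_zero_of_zero_dvd hd.2.1) hn.ne'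
            · exact absurd rfl hd.1
          · omega
        have hlt : n / d < n := Nat.div_lt_self hn hd1
        have hpos : 0 < n / d := Nat.div_pos (Nat.le_of_dvd hn hd.2.1) (by omega)
        rw [ih _ hlt hpos]
      rw [hrest] at h1
      have := h1.trans h2.symm
      simp only [Nat.div_one, hf1, one_mul] at this
      exact add_right_cancel this

end Aux

theorem dirichlet_inverse_of_hecke (f a : ℕ → ℝ)
    (hf1 : f 1 = 1)
    (hmul : ∀ m n : ℕ, Nat.Coprime m n → f (m * n) = f m * f n)
    (hecke : ∀ m n : ℕ, 0 < m → 0 < n →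
      f m * f n = ∑ d ∈ (Nat.gcd m n).divisors, f (m * n / d ^ 2))
    (hinv : ∀ n : ℕ, 0 < n →
      (∑ d ∈ n.divisors, f d * a (n / d)) = if n = 1 then 1 else 0)
    (m n : ℕ) (hm : Squarefree m) (hn : Squarefree n) (hco : Nat.Coprime m n) :
    a (m * n ^ 2) = (ArithmeticFunction.moebius m : ℝ) * f m := by
  have hm0 : m ≠ 0 := hm.ne_zero
  have hn0 : n ≠ 0 := hn.ne_zero
  have hpos : 0 < m * n ^ 2 := by positivity
  rw [a_eq_heckeG f a hf1 hmul hecke hinv _ hpos]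
  have hG := heckeG_isMult f
  have hco2 : Nat.Coprime m (n ^ 2) := hco.pow_right 2
  rw [hG.map_mul_of_coprime hco2]
  -- heckeG f (n ^ 2) = 1
  have hGn2 : heckeG f (n ^ 2) = 1 := by
    rw [heckeG_apply f (pow_ne_zero 2 hn0)]
    apply Finset.prod_eq_one
    intro p hp
    rw [Nat.primeFactors_pow n (by norm_num)] at hp
    have h1 : n.factorization p = 1 := by
      have hle := hn.natFactorization_le_one p
      have hge : 1 ≤ n.factorization p := by
        rw [← Nat.Prime.pow_dvd_iff_le_factorization (Nat.prime_of_mem_primeFactors hp) hn0,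
          pow_one]
        exact Nat.dvd_of_mem_primeFactors hp
      omega
    rw [Nat.factorization_pow, Finsupp.smul_apply, h1]
    norm_num
  rw [hGn2, mul_one]
  -- heckeG f m = μ m * f m
  rw [heckeG_apply f hm0]
  have hfac : ∀ p ∈ m.primeFactors, m.factorization p = 1 := by
    intro p hp
    have hle := hm.natFactorization_le_one p
    have hge : 1 ≤ m.factorization p := by
      rw [← Nat.Prime.pow_dvd_iff_le_factorization (Nat.prime_of_mem_primeFactors hp) hm0,
        pow_one]
      exact Nat.dvd_of_mem_primeFactors hp
    omega
  have hprod : ∏ p ∈ m.primeFactors,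
      (if m.factorization p = 1 then -f p else if m.factorization p = 2 then 1 else 0)
      = ∏ p ∈ m.primeFactors, (-f p) := by
    apply Finset.prod_congr rfl
    intro p hp
    rw [if_pos (hfac p hp)]
  rw [hprod]
  have hFm := heckeF_isMult f hf1 hmul
  have hfm : f m = ∏ p ∈ m.primeFactors, f p := by
    conv_lhs => rw [← Nat.prod_primeFactors_of_squarefree hm]
    rw [← heckeF_apply f (by
      rw [Nat.prod_primeFactors_of_squarefree hm]; exact hm0)]
    rw [hFm.map_prod_of_prime _ (fun p hp => Nat.prime_of_mem_primeFactors hp)]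
    apply Finset.prod_congr rfl
    intro p hp
    exact heckeF_apply f (Nat.prime_of_mem_primeFactors hp).ne_zero
  have hmu : (ArithmeticFunction.moebius m : ℝ) = (-1) ^ m.primeFactors.card := by
    rw [ArithmeticFunction.moebius_apply_of_squarefree hm]
    rw [← ArithmeticFunction.cardDistinctFactors_eq_cardFactors_iff_squarefree hm0 |>.mpr hm]
    rw [ArithmeticFunction.cardDistinctFactors_apply]
    rw [← List.card_toFinset, Nat.toFinset_factors]
    push_cast
    ring
  rw [hmu, hfm]
  rw [← Finset.prod_const (-1 : ℝ), ← Finset.prod_mul_distrib]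
  exact Finset.prod_congr rfl fun p _ => by ring
end

section
/- Let f satisfy the Hecke relation f(m)f(n) = ∑_{d|gcd(m,n)} f(mn/d²), f(1)=1, let a be its Dirichlet inverse, and let F : ℕ → ℝ be any function. Then for every n ≥ 1, ∑_{abc² = n} f(a) f(b) μ(b) μ(bc)² F(bc) = f(n) ∑_{αβ = n} μ(β) F(β). -/
/-!
Write `β = bc`. Since `μ(b) μ(bc)² = μ(bc) μ(c)`, the left side is
`∑_{β ∣ n} μ(β) F(β) ∑_{c ∣ (β, n/β)} μ(c) f(β/c) f(n/(βc))`, and the inner sum is `f(n)` by the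
Möbius-inverted Hecke relation `f(mk) = ∑_{d ∣ (m,k)} μ(d) f(m/d) f(k/d)`. That relation holds
because, writing `m = aN`, `k = bN` with `N = (m,k)` and `a, b` coprime, the Hecke relation reads
`f(au) f(bu) = ∑_{d ∣ u} f(ab d²)` for every `u`, which Möbius inversion in `u` turns around.
-/

open Finset ArithmeticFunction
open scoped ArithmeticFunction.Moebius

def IsHecke {R : Type*} [Semiring R] (f : ℕ → R) : Prop :=
  ∀ m n : ℕ, 0 < m → 0 < n → f m * f n = ∑ d ∈ (m.gcd n).divisors, f (m * n / d ^ 2)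

namespace IsHecke

variable {R : Type*} {f : ℕ → R}

theorem mul_mul_eq_sum_divisors [Semiring R] (hf : IsHecke f) {a b : ℕ} (hab : a.Coprime b)
    (ha : 0 < a) (hb : 0 < b) {u : ℕ} (hu : 0 < u) :
    f (a * u) * f (b * u) = ∑ d ∈ u.divisors, f (a * b * d ^ 2) := by
  rw [hf _ _ (by positivity) (by positivity), Nat.gcd_mul_right, hab, one_mul,
    ← Nat.sum_div_divisors u (fun d => f (a * b * d ^ 2))]
  refine sum_congr rfl fun d hd => ?_
  obtain ⟨e, rfl⟩ := Nat.dvd_of_mem_divisors hd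
  have hd0 : 0 < d := Nat.pos_of_mul_pos_right hu
  rw [Nat.mul_div_cancel_left _ hd0]
  exact congrArg f (Nat.div_eq_of_eq_mul_left (by positivity) (by ring))

theorem apply_mul_eq_sum_moebius [Ring R] (hf : IsHecke f) {m k : ℕ} (hm : 0 < m) (hk : 0 < k) :
    f (m * k) = ∑ d ∈ (m.gcd k).divisors, μ d * f (m / d) * f (k / d) := by
  obtain ⟨a, b, hab, hma, hkb⟩ := Nat.exists_coprime m k
  set N := m.gcd k
  have hN : 0 < N := Nat.gcd_pos_of_pos_left k hm
  have ha : 0 < a := Nat.pos_of_mul_pos_right (hma ▸ hm)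
  have hb : 0 < b := Nat.pos_of_mul_pos_right (hkb ▸ hk)
  have hinv := (sum_eq_iff_sum_mul_moebius_eq (f := fun d => f (a * b * d ^ 2))
    (g := fun u => f (a * u) * f (b * u))).1
    (fun u hu => (hf.mul_mul_eq_sum_divisors hab ha hb hu).symm) N hN
  rw [Nat.sum_divisorsAntidiagonal (fun d e => (μ d : R) * (f (a * e) * f (b * e)))] at hinv
  rw [show m * k = a * b * N ^ 2 by rw [hma, hkb]; ring, ← hinv]
  refine sum_congr rfl fun d hd => ?_
  rw [hma, hkb, Nat.mul_div_assoc _ (Nat.dvd_of_mem_divisors hd),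
    Nat.mul_div_assoc _ (Nat.dvd_of_mem_divisors hd), mul_assoc]

end IsHecke

theorem moebius_mul_moebius_mul_sq (b c : ℕ) : μ b * μ (b * c) ^ 2 = μ (b * c) * μ c := by
  by_cases h : Squarefree (b * c)
  · obtain ⟨hbc, -, hc⟩ := Nat.squarefree_mul_iff.1 h
    rw [moebius_sq_eq_one_of_squarefree h, isMultiplicative_moebius.map_mul_of_coprime hbc,
      mul_assoc, ← sq, moebius_sq_eq_one_of_squarefree hc]
  · simp [moebius_eq_zero_of_not_squarefree h]

theorem sum_mul_mul_sq_eq_sum_divisors_gcd {M : Type*} [AddCommMonoid M] (n : ℕ)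
    (g : ℕ × ℕ × ℕ → M) :
    ∑ p ∈ (Icc 1 n ×ˢ Icc 1 n ×ˢ Icc 1 n).filter (fun p => p.1 * (p.2.1 * p.2.2 ^ 2) = n),
      g p = ∑ β ∈ n.divisors, ∑ c ∈ (β.gcd (n / β)).divisors, g (n / β / c, β / c, c) := by
  set S := (Icc 1 n ×ˢ Icc 1 n ×ˢ Icc 1 n).filter (fun p => p.1 * (p.2.1 * p.2.2 ^ 2) = n)
  have mem_S : ∀ a b c : ℕ, (a, b, c) ∈ S ↔ 0 < a ∧ 0 < b ∧ 0 < c ∧ a * (b * c ^ 2) = n := by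
    intro a b c
    simp only [S, mem_filter, mem_product, mem_Icc]
    refine ⟨by omega, ?_⟩
    rintro ⟨ha, hb, hc, rfl⟩
    have hn : 0 < a * (b * c ^ 2) := by positivity
    exact ⟨⟨⟨ha, Nat.le_of_dvd hn ⟨b * c ^ 2, rfl⟩⟩, ⟨hb, Nat.le_of_dvd hn ⟨a * c ^ 2, by ring⟩⟩,
      ⟨hc, Nat.le_of_dvd hn ⟨a * b * c, by ring⟩⟩⟩, rfl⟩
  have quot_eq : ∀ a b c : ℕ, 0 < b → 0 < c → a * (b * c ^ 2) / (b * c) = a * c :=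
    fun a b c hb hc => Nat.div_eq_of_eq_mul_left (by positivity) (by ring)
  have left_inv : ∀ p ∈ S, (n / (p.2.1 * p.2.2) / p.2.2, p.2.1 * p.2.2 / p.2.2, p.2.2) = p := by
    rintro ⟨a, b, c⟩ h
    obtain ⟨-, hb, hc, rfl⟩ := (mem_S a b c).1 h
    rw [quot_eq a b c hb hc, Nat.mul_div_cancel a hc, Nat.mul_div_cancel b hc]
  rw [sum_sigma']
  refine sum_nbij' (fun p => ⟨p.2.1 * p.2.2, p.2.2⟩) (fun q => (n / q.1 / q.2, q.1 / q.2, q.2))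
    ?_ ?_ left_inv ?_ fun p hp => congrArg g (left_inv p hp).symm
  · rintro ⟨a, b, c⟩ h
    obtain ⟨ha, hb, hc, rfl⟩ := (mem_S a b c).1 h
    simp only [mem_sigma, Nat.mem_divisors, quot_eq a b c hb hc]
    refine ⟨⟨⟨a * c, by ring⟩, by positivity⟩, Nat.dvd_gcd (dvd_mul_left c b) (dvd_mul_left c a),
      (Nat.gcd_pos_of_pos_left _ (by positivity)).ne'⟩
  · rintro ⟨β, c⟩ h
    simp only [mem_sigma, Nat.mem_divisors] at h
    obtain ⟨⟨hβn, hn⟩, hcg, -⟩ := h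
    obtain ⟨b, rfl⟩ := hcg.trans (Nat.gcd_dvd_left _ _)
    obtain ⟨a, ha⟩ := hcg.trans (Nat.gcd_dvd_right _ _)
    have hn_eq : n = c * b * (c * a) := by rw [← ha, Nat.mul_div_cancel' hβn]
    rw [hn_eq, mul_ne_zero_iff, mul_ne_zero_iff, mul_ne_zero_iff] at hn
    have hc : 0 < c := Nat.pos_of_ne_zero hn.1.1
    rw [ha, Nat.mul_div_cancel_left a hc, Nat.mul_div_cancel_left b hc, mem_S]
    exact ⟨by omega, by omega, hc, by rw [hn_eq]; ring⟩
  · rintro ⟨β, c⟩ h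
    simp only [mem_sigma, Nat.mem_divisors] at h
    rw [Nat.div_mul_cancel (h.2.1.trans (Nat.gcd_dvd_left _ _))]

theorem hecke_mollifier_identity_general (f F : ℕ → ℝ)
    (hecke : ∀ m n : ℕ, 0 < m → 0 < n →
      f m * f n = ∑ d ∈ (Nat.gcd m n).divisors, f (m * n / d ^ 2))
    (n : ℕ) :
    ∑ p ∈ (Finset.Icc 1 n ×ˢ Finset.Icc 1 n ×ˢ Finset.Icc 1 n).filter
        (fun p => p.1 * (p.2.1 * p.2.2 ^ 2) = n),
      f p.1 * f p.2.1 * (ArithmeticFunction.moebius p.2.1 : ℝ) *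
        ((ArithmeticFunction.moebius (p.2.1 * p.2.2) : ℝ)) ^ 2 * F (p.2.1 * p.2.2)
    = f n * ∑ β ∈ n.divisors, (ArithmeticFunction.moebius β : ℝ) * F β := by
  rw [sum_mul_mul_sq_eq_sum_divisors_gcd, mul_sum]
  refine sum_congr rfl fun β hβ => ?_
  have hβ0 : 0 < β := Nat.pos_of_mem_divisors hβ
  have hecke_inv := IsHecke.apply_mul_eq_sum_moebius hecke hβ0
    (Nat.div_pos (Nat.divisor_le hβ) hβ0)
  rw [Nat.mul_div_cancel' (Nat.dvd_of_mem_divisors hβ)] at hecke_inv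
  rw [hecke_inv, sum_mul]
  refine sum_congr rfl fun c hc => ?_
  have hμ := moebius_mul_moebius_mul_sq (β / c) c
  rw [Nat.div_mul_cancel ((Nat.dvd_of_mem_divisors hc).trans (Nat.gcd_dvd_left _ _))] at hμ ⊢
  have hμ' : (μ (β / c) : ℝ) * μ β ^ 2 = μ β * μ c := by exact_mod_cast hμ
  linear_combination (f (n / β / c) * f (β / c) * F β) * hμ'

theorem hecke_mollifier_identity (f a F : ℕ → ℝ)
    (hf1 : f 1 = 1)
    (hecke : ∀ m n : ℕ, 0 < m → 0 < n →
      f m * f n = ∑ d ∈ (Nat.gcd m n).divisors, f (m * n / d ^ 2))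
    (hinv : ∀ n : ℕ, 0 < n →
      (∑ d ∈ n.divisors, f d * a (n / d)) = if n = 1 then 1 else 0)
    (n : ℕ) (hn : 1 ≤ n) :
    ∑ p ∈ (Finset.Icc 1 n ×ˢ Finset.Icc 1 n ×ˢ Finset.Icc 1 n).filter
        (fun p => p.1 * (p.2.1 * p.2.2 ^ 2) = n),
      f p.1 * f p.2.1 * (ArithmeticFunction.moebius p.2.1 : ℝ) *
        ((ArithmeticFunction.moebius (p.2.1 * p.2.2) : ℝ)) ^ 2 * F (p.2.1 * p.2.2)
    = f n * ∑ β ∈ n.divisors, (ArithmeticFunction.moebius β : ℝ) * F β :=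
  hecke_mollifier_identity_general f F hecke n
end

section
/- Let H : ℝ≥0 → ℝ≥0 be a function satisfying H(x) + H(1/x) = 1 for all x > 0. Then its Mellin transform H̃(s) = ∫₀^∞ H(y) y^{s-1} dy (wherever defined by analytic continuation) satisfies H̃(-s) = -H̃(s) away from s = 0; i.e., H̃ is an odd function of s. -/
/-!
The Mellin transform of the indicator of `(0, 1]` is `1 / s`. The remainder
`K = stepRemainder H = H - 𝟙_(0,1]` vanishes on `(0, 1/2]` and, by the functional equation, on
`[2, ∞)`, so `mellin K` is entire and `H̃ s = 1 / s + mellin K s` for `re s > 0`, hence on the whole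
punctured plane by analytic continuation. The functional equation also gives `K (1/x) = -K x` for
`x ≠ 1`, and the substitution `x ↦ 1/x` turns this into `mellin K (-s) = -mellin K s`. So `H̃` is a
sum of two odd functions.
-/

open MeasureTheory Set Complex Filter Asymptotics Topology

section Mellin

variable {E : Type*} [NormedAddCommGroup E] [NormedSpace ℂ E]

theorem mellin_neg_of_ae_comp_inv_eq_neg {f : ℝ → E} (hf : ∀ᵐ t, 0 < t → f t⁻¹ = -f t)
    (s : ℂ) : mellin f (-s) = -mellin f s := by
  rw [← mellin_comp_inv, mellin, mellin, ← integral_neg]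
  refine setIntegral_congr_ae measurableSet_Ioi ?_
  filter_upwards [hf] with t ht ht0
  rw [ht ht0, smul_neg]

theorem mellinConvergent_of_eventuallyEq_zero {f : ℝ → E} (hfc : LocallyIntegrableOn f (Ioi 0))
    (h_top : f =ᶠ[atTop] 0) (h_bot : f =ᶠ[𝓝[>] 0] 0) (s : ℂ) : MellinConvergent f s :=
  mellinConvergent_of_isBigO_rpow hfc (h_top.trans_isBigO (isBigO_zero _ _)) (lt_add_one _)
    (h_bot.trans_isBigO (isBigO_zero _ _)) (sub_one_lt _)

theorem differentiable_mellin_of_eventuallyEq_zero {f : ℝ → E}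
    (hfc : LocallyIntegrableOn f (Ioi 0)) (h_top : f =ᶠ[atTop] 0) (h_bot : f =ᶠ[𝓝[>] 0] 0) :
    Differentiable ℂ (mellin f) := fun _ =>
  mellin_differentiableAt_of_isBigO_rpow hfc (h_top.trans_isBigO (isBigO_zero _ _)) (lt_add_one _)
    (h_bot.trans_isBigO (isBigO_zero _ _)) (sub_one_lt _)

end Mellin

theorem eqOn_compl_zero_of_re_pos {F G : ℂ → ℂ} (hF : DifferentiableOn ℂ F {0}ᶜ)
    (hG : DifferentiableOn ℂ G {0}ᶜ) (h : ∀ s : ℂ, 0 < s.re → F s = G s) : EqOn F G {0}ᶜ := by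
  have hU : IsOpen ({0}ᶜ : Set ℂ) := isOpen_compl_singleton
  refine (hF.analyticOnNhd hU).eqOn_of_preconnected_of_eventuallyEq (hG.analyticOnNhd hU)
    (isConnected_compl_singleton_of_one_lt_rank (by simp) 0).isPreconnected one_ne_zero ?_
  filter_upwards [(isOpen_lt continuous_const continuous_re).mem_nhds (by simp : (0 : ℝ) < re 1)]
    with s hs using h s hs

theorem indicator_Ioc_zero_one_inv {t : ℝ} (ht : 0 < t) (ht1 : t ≠ 1) :
    (Ioc 0 1).indicator (fun _ => (1 : ℂ)) t⁻¹ = 1 - (Ioc 0 1).indicator (fun _ => 1) t := by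
  rcases ht1.lt_or_gt with hlt | hgt
  · have : ¬ t⁻¹ ≤ 1 := not_le.mpr ((one_lt_inv₀ ht).mpr hlt)
    simp [indicator, ht, hlt.le, this]
  · have : t⁻¹ ≤ 1 := inv_le_one_of_one_le₀ hgt.le
    simp [indicator, ht, not_le.mpr hgt, this]

noncomputable def stepRemainder (H : ℝ → ℝ) : ℝ → ℂ :=
  fun y => (H y : ℂ) - (Ioc 0 1).indicator (fun _ => 1) y

section StepRemainder

variable {H : ℝ → ℝ}

theorem eq_zero_of_two_le (hH1 : ∀ x ∈ Icc (0 : ℝ) (1 / 2), H x = 1)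
    (hfe : ∀ x : ℝ, 0 < x → H x + H (1 / x) = 1) {y : ℝ} (hy : 2 ≤ y) : H y = 0 := by
  have hy0 : 0 < y := by linarith
  have h_inv : 1 / y ∈ Icc (0 : ℝ) (1 / 2) :=
    ⟨by positivity, one_div_le_one_div_of_le two_pos hy⟩
  linarith [hfe y hy0, hH1 _ h_inv]

theorem stepRemainder_eventuallyEq_zero_atTop (hH1 : ∀ x ∈ Icc (0 : ℝ) (1 / 2), H x = 1)
    (hfe : ∀ x : ℝ, 0 < x → H x + H (1 / x) = 1) : stepRemainder H =ᶠ[atTop] 0 := by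
  filter_upwards [eventually_ge_atTop 2] with y hy
  have : ¬ y ≤ 1 := by linarith
  simp [stepRemainder, eq_zero_of_two_le hH1 hfe hy, this]

theorem stepRemainder_eventuallyEq_zero_nhdsGT (hH1 : ∀ x ∈ Icc (0 : ℝ) (1 / 2), H x = 1) :
    stepRemainder H =ᶠ[𝓝[>] 0] 0 := by
  filter_upwards [Ioc_mem_nhdsGT (by norm_num : (0 : ℝ) < 1 / 2)] with y hy
  have : y ≤ 1 := by linarith [hy.2]
  simp [stepRemainder, hH1 y (Ioc_subset_Icc_self hy), hy.1, this]

theorem locallyIntegrableOn_stepRemainder (hHc : Continuous H) :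
    LocallyIntegrableOn (stepRemainder H) (Ioi 0) := by
  have h_ind : Integrable ((Ioc (0 : ℝ) 1).indicator fun _ => (1 : ℂ)) :=
    (integrable_indicator_iff measurableSet_Ioc).mpr (integrableOn_const measure_Ioc_lt_top.ne)
  exact ((continuous_ofReal.comp hHc).locallyIntegrable.sub
    h_ind.locallyIntegrable).locallyIntegrableOn _

theorem stepRemainder_inv (hfe : ∀ x : ℝ, 0 < x → H x + H (1 / x) = 1) {t : ℝ} (ht : 0 < t)
    (ht1 : t ≠ 1) : stepRemainder H t⁻¹ = -stepRemainder H t := by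
  have h_inv : H t⁻¹ = 1 - H t := by linarith [one_div t ▸ hfe t ht]
  simp only [stepRemainder, h_inv, indicator_Ioc_zero_one_inv ht ht1]
  push_cast
  ring

theorem mellin_stepRemainder_neg (hfe : ∀ x : ℝ, 0 < x → H x + H (1 / x) = 1) (s : ℂ) :
    mellin (stepRemainder H) (-s) = -mellin (stepRemainder H) s := by
  refine mellin_neg_of_ae_comp_inv_eq_neg ?_ s
  filter_upwards [Measure.ae_ne volume (1 : ℝ)] with t ht1 ht using stepRemainder_inv hfe ht ht1

theorem mellin_eq_one_div_add_mellin_stepRemainder (hHc : Continuous H)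
    (hH1 : ∀ x ∈ Icc (0 : ℝ) (1 / 2), H x = 1) (hfe : ∀ x : ℝ, 0 < x → H x + H (1 / x) = 1)
    {s : ℂ} (hs : 0 < s.re) :
    mellin (fun y => (H y : ℂ)) s = 1 / s + mellin (stepRemainder H) s := by
  have hK := mellinConvergent_of_eventuallyEq_zero (locallyIntegrableOn_stepRemainder hHc)
    (stepRemainder_eventuallyEq_zero_atTop hH1 hfe) (stepRemainder_eventuallyEq_zero_nhdsGT hH1) s
  have h_step := hasMellin_one_Ioc hs
  have h_add := (hasMellin_add hK h_step.1).2
  simp only [stepRemainder, sub_add_cancel] at h_add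
  rw [h_add, h_step.2, add_comm]

end StepRemainder

theorem mellin_transform_odd (H : ℝ → ℝ) (G : ℂ → ℂ)
    (hHc : Continuous H)
    (hH1 : ∀ x ∈ Set.Icc (0 : ℝ) (1/2), H x = 1)
    (hfe : ∀ x : ℝ, 0 < x → H x + H (1 / x) = 1)
    (hG : DifferentiableOn ℂ G {s : ℂ | s ≠ 0})
    (hagree : ∀ s : ℂ, 0 < s.re →
      G s = ∫ y in Set.Ioi (0 : ℝ), (H y : ℂ) * (y : ℂ) ^ (s - 1)) :
    ∀ s : ℂ, s ≠ 0 → G (-s) = -G s := by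
  have hK : Differentiable ℂ (mellin (stepRemainder H)) :=
    differentiable_mellin_of_eventuallyEq_zero (locallyIntegrableOn_stepRemainder hHc)
      (stepRemainder_eventuallyEq_zero_atTop hH1 hfe) (stepRemainder_eventuallyEq_zero_nhdsGT hH1)
  have hG_eq : EqOn G (fun s => 1 / s + mellin (stepRemainder H) s) {0}ᶜ := by
    have h_inv : DifferentiableOn ℂ (fun s : ℂ => 1 / s) {0}ᶜ :=
      (differentiableOn_const 1).div differentiableOn_id fun _ h => h
    refine eqOn_compl_zero_of_re_pos hG (h_inv.add hK.differentiableOn) fun s hs => ?_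
    rw [hagree s hs, ← mellin_eq_one_div_add_mellin_stepRemainder hHc hH1 hfe hs, mellin]
    simp_rw [smul_eq_mul, mul_comm]
  intro s hs
  rw [hG_eq hs, hG_eq (neg_ne_zero.mpr hs)]
  dsimp only
  rw [mellin_stepRemainder_neg hfe]
  ring
end

section
/- Let D(s) = ∑_{n=1}^∞ b(n)/n^s where b(1) = 1, b(n) = 0 for 2 ≤ n ≤ N, and |b(n)| ≤ τ(n)³ for all n. Then for s real with s ≥ 1 + 9·log log N / log N and N sufficiently large, |D(s) - 1| = O(1/log N), where the implied constant is absolute. -/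
/-!
Rankin's trick. Put `σ = 1 + 9 / log N ≤ s`. Every term of `D(s) - 1` has `n > N`, where
`n ^ (-s) ≤ N ^ (σ - s) * n ^ (-σ)`, so `|D(s) - 1| ≤ N ^ (σ - s) * ∑ τ(n)³ n^(-σ)`.
Comparing prime powers, `(k + 1)³ ≤ (k + 7).choose 7` gives `τ(n)³ ≤ τ₈(n)`, the coefficients of
`ζ⁸`, so the sum is at most `ζ(σ)⁸ ≤ (1 + 1 / (σ - 1))⁸ ≤ (log N)⁸`; the lower bound on `s` makes
`N ^ (σ - s) ≤ e⁹ / (log N)⁹`.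
-/

open Finset
open scoped ArithmeticFunction.zeta ENNReal

theorem Nat.add_one_pow_three_le_add_seven_choose_seven (k : ℕ) :
    (k + 1) ^ 3 ≤ (k + 7).choose 7 := by
  induction k with
  | zero => simp
  | succ k ih =>
    have hrec := Nat.choose_mul_succ_eq (k + 7) 7
    rw [show k + 7 + 1 - 7 = k + 1 by omega] at hrec
    refine Nat.le_of_mul_le_mul_right ?_ k.succ_pos
    calc (k + 1 + 1) ^ 3 * (k + 1) ≤ (k + 8) * (k + 1) ^ 3 := by ring_nf; omega
      _ ≤ (k + 8) * (k + 7).choose 7 := by gcongr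
      _ = (k + 1 + 7).choose 7 * (k + 1) := by rw [← hrec]; ring

namespace ArithmeticFunction

theorem zeta_pow_succ_apply_prime_pow {p : ℕ} (hp : p.Prime) (m k : ℕ) :
    (ζ ^ (m + 1) : ArithmeticFunction ℕ) (p ^ k) = (k + m).choose m := by
  induction m generalizing k with
  | zero => simp [zeta_apply_ne (pow_ne_zero k hp.ne_zero)]
  | succ m ih =>
    rw [pow_succ', zeta_mul_apply, Nat.sum_divisors_prime_pow hp]
    simp only [ih]
    rw [Nat.sum_range_add_choose, add_assoc]

theorem IsMultiplicative.apply_le_of_forall_prime_pow {f g : ArithmeticFunction ℕ}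
    (hf : f.IsMultiplicative) (hg : g.IsMultiplicative)
    (h : ∀ p k : ℕ, p.Prime → f (p ^ k) ≤ g (p ^ k)) (n : ℕ) : f n ≤ g n := by
  rcases eq_or_ne n 0 with rfl | hn
  · simp
  rw [hf.multiplicative_factorization f hn, hg.multiplicative_factorization g hn]
  exact Finset.prod_le_prod' fun p hp => h p _ (Nat.prime_of_mem_primeFactors hp)

theorem card_divisors_pow_three_le_zeta_pow_eight (n : ℕ) :
    #n.divisors ^ 3 ≤ (ζ ^ 8 : ArithmeticFunction ℕ) n := by
  rw [← sigma_zero_apply, ← ppow_apply three_pos]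
  refine isMultiplicative_sigma.ppow.apply_le_of_forall_prime_pow
    isMultiplicative_zeta.pow (fun p k hp => ?_) n
  rw [ppow_apply three_pos, sigma_zero_apply_prime_pow hp, zeta_pow_succ_apply_prime_pow hp 7]
  exact Nat.add_one_pow_three_le_add_seven_choose_seven k

end ArithmeticFunction

namespace ENNReal

variable {w : ℕ → ℝ≥0∞}

theorem tsum_sum_divisorsAntidiagonal_le_tsum_prod (F : ℕ × ℕ → ℝ≥0∞) :
    ∑' n : ℕ, ∑ x ∈ n.divisorsAntidiagonal, F x ≤ ∑' x, F x := by
  simp_rw [← Finset.tsum_subtype]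
  rw [← ENNReal.tsum_sigma' (fun p : Σ n : ℕ, n.divisorsAntidiagonal => F p.2)]
  refine ENNReal.tsum_comp_le_tsum_of_injective (fun p q h => ?_) F
  obtain ⟨n, x, hx⟩ := p
  obtain ⟨m, y, hy⟩ := q
  obtain rfl : x = y := h
  obtain rfl : n = m :=
    (Nat.mem_divisorsAntidiagonal.1 hx).1.symm.trans (Nat.mem_divisorsAntidiagonal.1 hy).1
  rfl

theorem tsum_mul_tsum {α β : Type*} (f : α → ℝ≥0∞) (g : β → ℝ≥0∞) :
    (∑' a, f a) * ∑' b, g b = ∑' x : α × β, f x.1 * g x.2 := by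
  rw [ENNReal.tsum_prod', ← ENNReal.tsum_mul_right]
  simp_rw [ENNReal.tsum_mul_left]

theorem tsum_mul_apply_mul_le (hw : ∀ a b, w (a * b) = w a * w b) (f g : ArithmeticFunction ℕ) :
    ∑' n, ((f * g) n : ℝ≥0∞) * w n ≤ (∑' n, (f n : ℝ≥0∞) * w n) * ∑' n, (g n : ℝ≥0∞) * w n := by
  calc ∑' n, ((f * g) n : ℝ≥0∞) * w n
      = ∑' n : ℕ, ∑ x ∈ n.divisorsAntidiagonal,
          (f x.1 : ℝ≥0∞) * w x.1 * ((g x.2 : ℝ≥0∞) * w x.2) := by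
        refine tsum_congr fun n => ?_
        rw [ArithmeticFunction.mul_apply, Nat.cast_sum, Finset.sum_mul]
        refine Finset.sum_congr rfl fun x hx => ?_
        rw [← (Nat.mem_divisorsAntidiagonal.1 hx).1, hw, Nat.cast_mul]
        ring
    _ ≤ ∑' x : ℕ × ℕ, (f x.1 : ℝ≥0∞) * w x.1 * ((g x.2 : ℝ≥0∞) * w x.2) :=
        tsum_sum_divisorsAntidiagonal_le_tsum_prod _
    _ = _ := (tsum_mul_tsum (fun n => (f n : ℝ≥0∞) * w n) fun n => (g n : ℝ≥0∞) * w n).symm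

theorem tsum_pow_apply_mul_le (hw : ∀ a b, w (a * b) = w a * w b) (hw₁ : w 1 ≤ 1)
    (f : ArithmeticFunction ℕ) (k : ℕ) :
    ∑' n, ((f ^ k) n : ℝ≥0∞) * w n ≤ (∑' n, (f n : ℝ≥0∞) * w n) ^ k := by
  induction k with
  | zero => simpa [ArithmeticFunction.one_apply, ite_mul] using hw₁
  | succ k ih =>
    rw [pow_succ, pow_succ]
    exact (tsum_mul_apply_mul_le hw _ _).trans (by gcongr)

end ENNReal

open Real

theorem tsum_natCast_rpow_neg_le {σ : ℝ} (hσ : 1 < σ) :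
    ∑' n : ℕ, (n : ℝ) ^ (-σ) ≤ 1 + (σ - 1)⁻¹ := by
  have hsum : Summable fun n : ℕ => (n : ℝ) ^ (-σ) := Real.summable_nat_rpow.2 (by linarith)
  -- `ζ(σ) - 1 / (σ - 1) = 1 - σ * termTSum σ`, a sum of integrals of nonnegative functions
  have htail := ZetaAsymptotics.zeta_limit_aux1 hσ
  have hterm : 0 ≤ ZetaAsymptotics.termTSum σ :=
    tsum_nonneg fun n => ZetaAsymptotics.term_nonneg _ _
  have hshift : ∑' n : ℕ, (n : ℝ) ^ (-σ) = ∑' n : ℕ, 1 / ((n : ℝ) + 1) ^ σ := by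
    rw [hsum.tsum_eq_zero_add, Nat.cast_zero, zero_rpow (by linarith), zero_add]
    exact tsum_congr fun n => by push_cast; rw [rpow_neg (by positivity), one_div]
  rw [hshift, inv_eq_one_div]
  linarith [mul_nonneg (by linarith : (0:ℝ) ≤ σ) hterm]

theorem summable_and_tsum_le_of_tsum_ofReal_le {α : Type*} {f : α → ℝ} (hf : ∀ a, 0 ≤ f a)
    {B : ℝ} (hB : 0 ≤ B) (h : ∑' a, ENNReal.ofReal (f a) ≤ ENNReal.ofReal B) :
    Summable f ∧ ∑' a, f a ≤ B := by
  have hs : Summable f := by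
    simpa [ENNReal.toReal_ofReal (hf _)] using
      ENNReal.summable_toReal (ne_top_of_le_ne_top ENNReal.ofReal_ne_top h)
  refine ⟨hs, ?_⟩
  rwa [← ENNReal.ofReal_tsum_of_nonneg hf hs, ENNReal.ofReal_le_ofReal_iff hB] at h

theorem rpow_neg_le_rpow_sub_mul_rpow_neg {x y σ s : ℝ} (hx : 0 < x) (hxy : x ≤ y) (hσs : σ ≤ s) :
    y ^ (-s) ≤ x ^ (σ - s) * y ^ (-σ) := by
  calc y ^ (-s) = y ^ (σ - s) * y ^ (-σ) := by
        rw [← rpow_add (hx.trans_le hxy)]; ring_nf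
    _ ≤ x ^ (σ - s) * y ^ (-σ) := by
        have hy : 0 ≤ y ^ (-σ) := rpow_nonneg (hx.le.trans hxy) _
        exact mul_le_mul_of_nonneg_right (rpow_le_rpow_of_nonpos hx hxy (by linarith)) hy

theorem tsum_ofReal_card_divisors_pow_three_mul_rpow_neg_le {σ : ℝ} (hσ : 1 < σ) :
    ∑' n : ℕ, ENNReal.ofReal ((#n.divisors : ℝ) ^ 3 * (n : ℝ) ^ (-σ))
      ≤ ENNReal.ofReal ((1 + (σ - 1)⁻¹) ^ 8) := by
  set w : ℕ → ℝ≥0∞ := fun n => ENNReal.ofReal ((n : ℝ) ^ (-σ))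
  have hw : ∀ a b, w (a * b) = w a * w b := fun a b => by
    simp only [w, Nat.cast_mul, mul_rpow (Nat.cast_nonneg a) (Nat.cast_nonneg b),
      ENNReal.ofReal_mul (rpow_nonneg (Nat.cast_nonneg a) _)]
  have hζ : ∑' n, ((ζ : ArithmeticFunction ℕ) n : ℝ≥0∞) * w n ≤ ∑' n, w n :=
    ENNReal.tsum_le_tsum fun n => mul_le_of_le_one_left' (by
      rw [ArithmeticFunction.zeta_apply]; split_ifs <;> simp)
  have hzeta : ∑' n, w n ≤ ENNReal.ofReal (1 + (σ - 1)⁻¹) := by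
    rw [← ENNReal.ofReal_tsum_of_nonneg (fun n => rpow_nonneg (Nat.cast_nonneg n) _)
      (Real.summable_nat_rpow.2 (by linarith))]
    exact ENNReal.ofReal_le_ofReal (tsum_natCast_rpow_neg_le hσ)
  calc ∑' n : ℕ, ENNReal.ofReal ((#n.divisors : ℝ) ^ 3 * (n : ℝ) ^ (-σ))
      = ∑' n, ((#n.divisors ^ 3 : ℕ) : ℝ≥0∞) * w n := tsum_congr fun n => by
        rw [ENNReal.ofReal_mul (by positivity)]; norm_cast
    _ ≤ ∑' n, ((ζ ^ 8 : ArithmeticFunction ℕ) n : ℝ≥0∞) * w n :=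
        ENNReal.tsum_le_tsum fun n => by
          gcongr; exact ArithmeticFunction.card_divisors_pow_three_le_zeta_pow_eight n
    _ ≤ (∑' n, ((ζ : ArithmeticFunction ℕ) n : ℝ≥0∞) * w n) ^ 8 :=
        ENNReal.tsum_pow_apply_mul_le hw (by simp [w]) ζ 8
    _ ≤ ENNReal.ofReal (1 + (σ - 1)⁻¹) ^ 8 := by gcongr; exact hζ.trans hzeta
    _ = ENNReal.ofReal ((1 + (σ - 1)⁻¹) ^ 8) := (ENNReal.ofReal_pow (by positivity) 8).symm

theorem abs_tsum_div_rpow_sub_one_le {a b : ℕ → ℝ} {N : ℕ} {σ s : ℝ} (hN : 0 < N) (hσs : σ ≤ s)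
    (ha : ∀ n, 0 ≤ a n) (hsum : Summable fun n : ℕ => a n * (n : ℝ) ^ (-σ))
    (hb₁ : b 1 = 1) (hb₀ : ∀ n, 2 ≤ n → n ≤ N → b n = 0) (hba : ∀ n, 1 ≤ n → |b n| ≤ a n) :
    |(∑' n : ℕ+, b n / (n : ℝ) ^ s) - 1| ≤ (N : ℝ) ^ (σ - s) * ∑' n : ℕ, a n * (n : ℝ) ^ (-σ) := by
  set f : ℕ+ → ℝ := fun n => b n / (n : ℝ) ^ s
  have hterm : ∀ n : ℕ+, ‖f n‖ ≤ a n * (n : ℝ) ^ (-s) := fun n => by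
    have hn : (0 : ℝ) < n := by exact_mod_cast n.pos
    rw [Real.norm_eq_abs, abs_div, abs_of_pos (rpow_pos_of_pos hn s), rpow_neg hn.le,
      div_eq_mul_inv]
    exact mul_le_mul_of_nonneg_right (hba n n.pos) (by positivity)
  have hdom : ∀ n : ℕ+, ‖f n‖ ≤ a n * (n : ℝ) ^ (-σ) := fun n =>
    (hterm n).trans (mul_le_mul_of_nonneg_left (rpow_le_rpow_of_exponent_le
      (by exact_mod_cast n.pos) (by linarith)) (ha n))
  have hsum' : Summable fun n : ℕ+ => a n * (n : ℝ) ^ (-σ) := hsum.comp_injective PNat.coe_injective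
  have htail : ∀ n : ℕ+,
      ‖if n = 1 then 0 else f n‖ ≤ (N : ℝ) ^ (σ - s) * (a n * (n : ℝ) ^ (-σ)) := by
    intro n
    have hnonneg : 0 ≤ (N : ℝ) ^ (σ - s) * (a n * (n : ℝ) ^ (-σ)) := by
      have := ha n; positivity
    split_ifs with h1
    · simpa using hnonneg
    rcases le_or_gt (n : ℕ) N with hnN | hNn
    · have h2 : 2 ≤ (n : ℕ) := by have := PNat.coe_eq_one_iff.not.2 h1; have := n.pos; omega
      simpa [f, hb₀ n h2 hnN] using hnonneg
    calc ‖f n‖ ≤ a n * (n : ℝ) ^ (-s) := hterm n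
      _ ≤ a n * ((N : ℝ) ^ (σ - s) * (n : ℝ) ^ (-σ)) :=
        mul_le_mul_of_nonneg_left (rpow_neg_le_rpow_sub_mul_rpow_neg (by exact_mod_cast hN)
          (by exact_mod_cast hNn.le) hσs) (ha n)
      _ = _ := by ring
  rw [(Summable.of_norm_bounded hsum' hdom).tsum_eq_add_tsum_ite 1]
  simp only [f, PNat.one_coe, hb₁, Nat.cast_one, one_rpow, div_one, add_sub_cancel_left]
  calc |∑' n : ℕ+, if n = 1 then 0 else f n|
      ≤ ∑' n : ℕ+, (N : ℝ) ^ (σ - s) * (a n * (n : ℝ) ^ (-σ)) :=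
        tsum_of_norm_bounded (hsum'.mul_left _).hasSum htail
    _ = (N : ℝ) ^ (σ - s) * ∑' n : ℕ+, a n * (n : ℝ) ^ (-σ) := tsum_mul_left
    _ ≤ (N : ℝ) ^ (σ - s) * ∑' n : ℕ, a n * (n : ℝ) ^ (-σ) := by
        gcongr
        exact tsum_comp_le_tsum_of_inj hsum (fun n => by have := ha n; positivity)
          PNat.coe_injective

theorem rpow_sub_mul_one_add_inv_pow_le_exp_div_log {x s : ℝ} (hx : exp (exp 9) ≤ x)
    (hs : 1 + 9 * log (log x) / log x ≤ s) :
    x ^ (1 + 9 / log x - s) * (1 + (9 / log x)⁻¹) ^ 8 ≤ exp 9 / log x := by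
  have hx₀ : 0 < x := (exp_pos _).trans_le hx
  set L := log x with hL_def
  have hL : exp 9 ≤ L := (le_log_iff_exp_le hx₀).2 hx
  have hL₀ : 0 < L := (exp_pos 9).trans_le hL
  have hrankin : x ^ (1 + 9 / L - s) ≤ exp 9 / L ^ 9 := calc
    x ^ (1 + 9 / L - s) ≤ x ^ (1 + 9 / L - (1 + 9 * log L / L)) :=
      rpow_le_rpow_of_exponent_le ((one_le_exp (exp_pos 9).le).trans hx) (by linarith)
    _ = exp 9 / L ^ 9 := by
      have hexponent : L * (1 + 9 / L - (1 + 9 * log L / L)) = 9 - 9 * log L := by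
        field_simp; ring
      rw [rpow_def_of_pos hx₀, ← hL_def, hexponent, exp_sub,
        show (9 : ℝ) * log L = (9 : ℕ) * log L by norm_num, exp_nat_mul, exp_log hL₀]
  have hζ : (1 + (9 / L)⁻¹) ^ 8 ≤ L ^ 8 := by
    have h10 : (10 : ℝ) ≤ L := by linarith [add_one_le_exp (9 : ℝ)]
    gcongr
    rw [inv_div]
    linarith
  calc x ^ (1 + 9 / L - s) * (1 + (9 / L)⁻¹) ^ 8 ≤ exp 9 / L ^ 9 * L ^ 8 :=
        mul_le_mul hrankin hζ (by positivity) (by positivity)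
    _ = exp 9 / L := by field_simp

theorem dirichlet_tail_bound :
    ∃ C N₀ : ℝ, 0 < C ∧ ∀ N : ℕ, N₀ ≤ (N : ℝ) → ∀ b : ℕ → ℝ,
      b 1 = 1 →
      (∀ n : ℕ, 2 ≤ n → n ≤ N → b n = 0) →
      (∀ n : ℕ, 1 ≤ n → |b n| ≤ ((n.divisors.card : ℝ)) ^ 3) →
      ∀ s : ℝ, 1 + 9 * Real.log (Real.log N) / Real.log N ≤ s →
        |(∑' n : ℕ+, b (n : ℕ) / ((n : ℕ) : ℝ) ^ s) - 1| ≤ C / Real.log N := by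
  refine ⟨exp 9, exp (exp 9), exp_pos 9, fun N hN b hb₁ hb₀ hba s hs => ?_⟩
  have hN₀ : (0 : ℝ) < N := (exp_pos _).trans_le hN
  have hL : exp 9 ≤ log N := (le_log_iff_exp_le hN₀).2 hN
  have hL₀ : 0 < log N := (exp_pos 9).trans_le hL
  have hσ : 1 < 1 + 9 / log N := lt_add_of_pos_right 1 (by positivity)
  have hσs : 1 + 9 / log N ≤ s := by
    have hlogL : 9 ≤ log (log N) := (le_log_iff_exp_le hL₀).2 hL
    have : 9 / log N ≤ 9 * log (log N) / log N :=
      div_le_div_of_nonneg_right (by linarith) hL₀.le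
    linarith
  obtain ⟨hsum, htsum⟩ := summable_and_tsum_le_of_tsum_ofReal_le (fun n => by positivity)
    (by positivity) (tsum_ofReal_card_divisors_pow_three_mul_rpow_neg_le hσ)
  rw [add_sub_cancel_left] at htsum
  calc _ ≤ (N : ℝ) ^ (1 + 9 / log N - s) *
          ∑' n : ℕ, (n.divisors.card : ℝ) ^ 3 * (n : ℝ) ^ (-(1 + 9 / log N)) :=
        abs_tsum_div_rpow_sub_one_le (Nat.cast_pos.1 hN₀) hσs (fun n => by positivity) hsum
          hb₁ hb₀ hba
    _ ≤ (N : ℝ) ^ (1 + 9 / log N - s) * (1 + (9 / log N)⁻¹) ^ 8 := by gcongr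
    _ ≤ exp 9 / log N := rpow_sub_mul_one_add_inv_pow_le_exp_div_log hN hs
end
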